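/- Let n ≥ 2 be an integer and θ ∈ (0, π/2) a real number. Let S = { x = (x_1,…,x_n) ∈ ℝ^n : ‖x‖ ≤ 1 and x_1 ≥ ‖x‖ cos θ }. Then v_{n−1} · cos θ · (sin θ)^{n−1} / n ≤ vol_n(S) ≤ v_{n−1} · (sin θ)^{n−1}, where vol_n is Lebesgue measure on ℝ^n. -/

import Mathlib

/-!
Split `ℝⁿ = ℝ × ℝⁿ⁻¹` along the first coordinate. The cap contains the solid cone
`{0 ≤ x₁ ≤ cos θ, ‖x'‖ ≤ x₁ tan θ}`, whose volume is
`v_{n-1} ∫₀^{cos θ} (s tan θ)ⁿ⁻¹ ds = v_{n-1} cos θ sinⁿ⁻¹ θ / n`, and is contained in the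
cylinder `[0, 1] × B(0, sin θ)`, of volume `v_{n-1} sinⁿ⁻¹ θ`.
-/

open MeasureTheory Filter

/-- `vball n` is the Lebesgue volume of the closed unit Euclidean ball in ℝⁿ. -/
noncomputable def vball (n : ℕ) : ℝ :=
  (volume (Metric.closedBall (0 : EuclideanSpace ℝ (Fin n)) 1)).toReal

open Set Metric Module Real EuclideanSpace

namespace EuclideanSpace

noncomputable def measurableEquivHeadTail (m : ℕ) :
    EuclideanSpace ℝ (Fin (m + 1)) ≃ᵐ ℝ × EuclideanSpace ℝ (Fin m) :=
  (MeasurableEquiv.toLp 2 _).symm.trans <|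
    (MeasurableEquiv.piFinSuccAbove (fun _ => ℝ) 0).trans <|
      MeasurableEquiv.prodCongr (MeasurableEquiv.refl ℝ) (MeasurableEquiv.toLp 2 _)

@[simp]
theorem measurableEquivHeadTail_apply {m : ℕ} (x : EuclideanSpace ℝ (Fin (m + 1))) :
    measurableEquivHeadTail m x = (x 0, WithLp.toLp 2 (Fin.tail x)) := rfl

theorem measurePreserving_measurableEquivHeadTail (m : ℕ) :
    MeasurePreserving (measurableEquivHeadTail m) :=
  ((MeasurePreserving.id volume).prod (PiLp.volume_preserving_toLp _)).comp <|
    (volume_preserving_piFinSuccAbove (fun _ : Fin (m + 1) => ℝ) 0).comp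
      (PiLp.volume_preserving_ofLp _)

theorem norm_sq_eq_head_sq_add_norm_tail_sq {m : ℕ} (x : EuclideanSpace ℝ (Fin (m + 1))) :
    ‖x‖ ^ 2 = x 0 ^ 2 + ‖(measurableEquivHeadTail m x).2‖ ^ 2 := by
  simp [EuclideanSpace.real_norm_sq_eq, Fin.sum_univ_succ, Fin.tail]

end EuclideanSpace

section Cone

variable {E : Type*} [NormedAddCommGroup E]

def solidCone (h k : ℝ) : Set (ℝ × E) :=
  {p | p.1 ∈ Icc 0 h ∧ ‖p.2‖ ≤ k * p.1}

theorem measurableSet_solidCone [MeasurableSpace E] [OpensMeasurableSpace E] (h k : ℝ) :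
    MeasurableSet (solidCone (E := E) h k) :=
  (measurableSet_Icc.preimage measurable_fst).inter
    (measurableSet_le (f := fun p : ℝ × E => ‖p.2‖) (by fun_prop) (by fun_prop))

variable [NormedSpace ℝ E] [MeasurableSpace E] [BorelSpace E] [FiniteDimensional ℝ E]
  (μ : Measure E) [μ.IsAddHaarMeasure]

theorem volume_prod_solidCone {h k : ℝ} (hh : 0 ≤ h) (hk : 0 ≤ k) :
    (volume.prod μ) (solidCone h k) =
      ENNReal.ofReal (k ^ finrank ℝ E * h ^ (finrank ℝ E + 1) / (finrank ℝ E + 1)) *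
        μ (closedBall 0 1) := by
  set d := finrank ℝ E
  have hslice : ∀ s, μ (Prod.mk s ⁻¹' solidCone h k) =
      (Icc 0 h).indicator (fun s => ENNReal.ofReal ((k * s) ^ d) * μ (closedBall 0 1)) s := by
    intro s
    by_cases hs : s ∈ Icc 0 h
    · have : Prod.mk s ⁻¹' solidCone h k = closedBall (0 : E) (k * s) := by
        ext y
        simp only [solidCone, mem_preimage, mem_ofPred_eq, hs, true_and, mem_closedBall,
          dist_zero_right]
      rw [indicator_of_mem hs, this, μ.addHaar_closedBall' 0 (mul_nonneg hk hs.1)]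
    · have : Prod.mk s ⁻¹' solidCone h k = (∅ : Set E) := by
        ext y
        simp only [solidCone, mem_preimage, mem_ofPred_eq, hs, false_and, mem_empty_iff_false]
      rw [indicator_of_notMem hs, this, measure_empty]
  have hint : ∫ s in 0..h, (k * s) ^ d = k ^ d * h ^ (d + 1) / (d + 1) := by
    simp_rw [mul_pow, intervalIntegral.integral_const_mul, integral_pow]
    rw [zero_pow (Nat.succ_ne_zero d), sub_zero, mul_div_assoc]
  rw [Measure.prod_apply (measurableSet_solidCone h k), lintegral_congr hslice,
    lintegral_indicator measurableSet_Icc, lintegral_mul_const _ (by fun_prop), ← hint,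
    intervalIntegral.integral_of_le hh, ← integral_Icc_eq_integral_Ioc,
    ofReal_integral_eq_lintegral_ofReal]
  · exact (continuous_const.mul continuous_id).pow d |>.integrableOn_Icc
  · exact (ae_restrict_iff' measurableSet_Icc).2 <| ae_of_all _ fun s hs =>
      pow_nonneg (mul_nonneg hk hs.1) d

theorem volume_prod_Icc_prod_closedBall {h r : ℝ} (hr : 0 ≤ r) :
    (volume.prod μ) (Icc 0 h ×ˢ closedBall 0 r) =
      ENNReal.ofReal (h * r ^ finrank ℝ E) * μ (closedBall 0 1) := by
  rw [Measure.prod_prod, Real.volume_Icc, μ.addHaar_closedBall' 0 hr, sub_zero, ← mul_assoc,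
    ENNReal.ofReal_mul' (by positivity)]

end Cone

def sphericalCap (m : ℕ) (θ : ℝ) : Set (EuclideanSpace ℝ (Fin (m + 1))) :=
  {x | ‖x‖ ≤ 1 ∧ ‖x‖ * cos θ ≤ x 0}

theorem sphericalCap_subset_preimage_Icc_prod_closedBall {m : ℕ} {θ : ℝ} (hcos : 0 ≤ cos θ)
    (hsin : 0 ≤ sin θ) :
    sphericalCap m θ ⊆ measurableEquivHeadTail m ⁻¹' (Icc 0 1 ×ˢ closedBall 0 (sin θ)) := by
  rintro x ⟨hx1, hxc⟩
  simp only [mem_preimage, measurableEquivHeadTail_apply, mem_prod, mem_Icc]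
  have hsplit := norm_sq_eq_head_sq_add_norm_tail_sq x
  set y := (measurableEquivHeadTail m x).2
  have h0 : 0 ≤ x 0 := (mul_nonneg (norm_nonneg x) hcos).trans hxc
  have hpyth := sin_sq_add_cos_sq θ
  have hx1' : ‖x‖ ^ 2 ≤ 1 := pow_le_one₀ (norm_nonneg x) hx1
  refine ⟨⟨h0, ?_⟩, ?_⟩
  · nlinarith [norm_nonneg y]
  · rw [mem_closedBall, dist_zero_right]
    have : ‖y‖ ^ 2 ≤ sin θ ^ 2 := by
      nlinarith [mul_le_mul hxc hxc (by positivity) h0,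
        mul_le_mul_of_nonneg_right hx1' (sq_nonneg (sin θ))]
    exact (pow_le_pow_iff_left₀ (norm_nonneg y) hsin two_ne_zero).1 this

theorem preimage_solidCone_subset_sphericalCap {m : ℕ} {θ : ℝ} (hcos : 0 < cos θ) :
    measurableEquivHeadTail m ⁻¹' solidCone (cos θ) (tan θ) ⊆ sphericalCap m θ := by
  rintro x ⟨⟨h0, hxc⟩, hy⟩
  have hsplit := norm_sq_eq_head_sq_add_norm_tail_sq x
  set y := (measurableEquivHeadTail m x).2
  simp only [measurableEquivHeadTail_apply] at h0 hxc hy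
  rw [tan_eq_sin_div_cos] at hy
  have hyc : ‖y‖ * cos θ ≤ sin θ * x 0 := by
    rwa [div_mul_eq_mul_div, le_div_iff₀ hcos] at hy
  have hpyth := sin_sq_add_cos_sq θ
  have key : (‖x‖ * cos θ) ^ 2 ≤ x 0 ^ 2 := by
    nlinarith [pow_le_pow_left₀ (mul_nonneg (norm_nonneg y) hcos.le) hyc 2]
  have hxc' : ‖x‖ * cos θ ≤ x 0 := abs_le_of_sq_le_sq' key h0 |>.2
  refine ⟨?_, hxc'⟩
  nlinarith

theorem volume_sphericalCap_ge {m : ℕ} {θ : ℝ} (hcos : 0 < cos θ) (hsin : 0 ≤ sin θ) :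
    ENNReal.ofReal (cos θ * sin θ ^ m / (m + 1)) *
      volume (closedBall (0 : EuclideanSpace ℝ (Fin m)) 1) ≤ volume (sphericalCap m θ) :=
  calc _ = volume (measurableEquivHeadTail m ⁻¹' solidCone (cos θ) (tan θ)) := by
        rw [(measurePreserving_measurableEquivHeadTail m).measure_preimage_equiv,
          Measure.volume_eq_prod, tan_eq_sin_div_cos,
          volume_prod_solidCone _ hcos.le (div_nonneg hsin hcos.le), finrank_euclideanSpace_fin]
        congr 2
        rw [div_pow, pow_succ]
        field_simp
    _ ≤ _ := measure_mono (preimage_solidCone_subset_sphericalCap hcos)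

theorem volume_sphericalCap_le {m : ℕ} {θ : ℝ} (hcos : 0 ≤ cos θ) (hsin : 0 ≤ sin θ) :
    volume (sphericalCap m θ) ≤
      ENNReal.ofReal (sin θ ^ m) * volume (closedBall (0 : EuclideanSpace ℝ (Fin m)) 1) :=
  calc _ ≤ volume (measurableEquivHeadTail m ⁻¹' (Icc 0 1 ×ˢ closedBall 0 (sin θ))) :=
        measure_mono (sphericalCap_subset_preimage_Icc_prod_closedBall hcos hsin)
    _ = _ := by
        rw [(measurePreserving_measurableEquivHeadTail m).measure_preimage_equiv,
          Measure.volume_eq_prod, volume_prod_Icc_prod_closedBall _ hsin,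
          finrank_euclideanSpace_fin, one_mul]

/-- For n ≥ 2 and θ ∈ (0, π/2), with S = { x ∈ ℝⁿ : ‖x‖ ≤ 1 and x₁ ≥ ‖x‖ cos θ },
one has v_{n−1}·cos θ·(sin θ)^{n−1}/n ≤ vol_n(S) ≤ v_{n−1}·(sin θ)^{n−1}. -/
theorem volume_spherical_cap_bounds (n : ℕ) (hn : 2 ≤ n) (θ : ℝ)
    (hθ0 : 0 < θ) (hθ : θ < Real.pi / 2) :
    vball (n - 1) * Real.cos θ * Real.sin θ ^ (n - 1) / (n : ℝ) ≤
      (volume {x : EuclideanSpace ℝ (Fin n) |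
        ‖x‖ ≤ 1 ∧ ‖x‖ * Real.cos θ ≤ x ⟨0, by omega⟩}).toReal ∧
    (volume {x : EuclideanSpace ℝ (Fin n) |
        ‖x‖ ≤ 1 ∧ ‖x‖ * Real.cos θ ≤ x ⟨0, by omega⟩}).toReal ≤
      vball (n - 1) * Real.sin θ ^ (n - 1) := by
  obtain ⟨m, rfl⟩ : ∃ m, n = m + 1 := ⟨n - 1, by omega⟩
  change _ ≤ (volume (sphericalCap m θ)).toReal ∧ (volume (sphericalCap m θ)).toReal ≤ _
  have hcos : 0 < cos θ := cos_pos_of_mem_Ioo ⟨by linarith, hθ⟩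
  have hsin : 0 < sin θ := sin_pos_of_pos_of_lt_pi hθ0 (by linarith)
  have hlower := volume_sphericalCap_ge (m := m) hcos hsin.le
  have hupper := volume_sphericalCap_le (m := m) hcos.le hsin.le
  have hfin : ENNReal.ofReal (sin θ ^ m) * volume (closedBall (0 : EuclideanSpace ℝ (Fin m)) 1)
      ≠ ⊤ := ENNReal.mul_ne_top ENNReal.ofReal_ne_top measure_closedBall_lt_top.ne
  rw [Nat.add_sub_cancel, vball]
  constructor
  · calc _ = (ENNReal.ofReal (cos θ * sin θ ^ m / (m + 1)) *
          volume (closedBall (0 : EuclideanSpace ℝ (Fin m)) 1)).toReal := by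
          rw [ENNReal.toReal_mul, ENNReal.toReal_ofReal (by positivity)]
          push_cast
          ring
      _ ≤ _ := ENNReal.toReal_mono (hupper.trans_lt hfin.lt_top).ne hlower
  · calc _ ≤ _ := ENNReal.toReal_mono hfin hupper
      _ = _ := by rw [ENNReal.toReal_mul, ENNReal.toReal_ofReal (by positivity), mul_comm]
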